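/- arXiv:1001.5120 — 2 statements merged into one kernel-verified Lean document; each statement's English description precedes it below -/
import Mathlib

section
/- For every integer m ≥ 3, the substitution √u = √(1+t^m) − t^{m/2} transforms ∫₀^∞ (√(1+t^m) − t^{m/2}) dt into (1/(2^{2/m} m)) · (B(2/m, 1/2 − 1/m) + B(2/m, 3/2 − 1/m)), and hence ∫₀^∞ (√(1+t^m) − t^{m/2}) dt = (1/(2^{2/m} m)) · (B(2/m, 1/2 − 1/m) + B(2/m, 3/2 − 1/m)). -/
/-!
Put `t ^ p = (1 - u) ^ 2 / (4 * u)`, equivalently `√u = √(1 + t ^ p) - t ^ (p / 2)`; this is a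
bijection between `u ∈ (0, 1)` and `t ∈ (0, ∞)` under which the integrand becomes `√u`.
We change variables in the direction `u ↦ t = 2 ^ (-2/p) (1 - u) ^ (2/p) u ^ (-1/p)`, whose
derivative has absolute value `2 ^ (-2/p) / p · (1 + u) (1 - u) ^ (2/p - 1) u ^ (-1/p - 1)`.
After multiplying by `√u`, the factor `1 + u` splits the result into the integrands of
`B(2/p, 1/2 - 1/p)` and `B(2/p, 3/2 - 1/p)`.
-/

open Real MeasureTheory Set

noncomputable def realBeta (x y : ℝ) : ℝ := Real.Gamma x * Real.Gamma y / Real.Gamma (x + y)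

section Beta

variable {x y : ℝ}

lemma ofReal_one_sub_rpow_mul_rpow {u : ℝ} (hu : u ∈ Ioo 0 1) :
    (((1 - u) ^ (x - 1) * u ^ (y - 1) : ℝ) : ℂ) =
      (u : ℂ) ^ ((y : ℂ) - 1) * (1 - (u : ℂ)) ^ ((x : ℂ) - 1) := by
  rw [Complex.ofReal_mul, Complex.ofReal_cpow (sub_pos.2 hu.2).le, Complex.ofReal_cpow hu.1.le]
  push_cast
  ring

lemma integrableOn_one_sub_rpow_mul_rpow (hx : 0 < x) (hy : 0 < y) :
    IntegrableOn (fun u : ℝ => (1 - u) ^ (x - 1) * u ^ (y - 1)) (Ioo 0 1) := by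
  have hC :
      IntegrableOn (fun u : ℝ => (((1 - u) ^ (x - 1) * u ^ (y - 1) : ℝ) : ℂ)) (Ioo 0 1) :=
    (((intervalIntegrable_iff_integrableOn_Ioc_of_le zero_le_one).mp
      (Complex.betaIntegral_convergent (u := y) (v := x) (by simpa) (by simpa))).mono_set
      Ioo_subset_Ioc_self).congr_fun (fun u hu => (ofReal_one_sub_rpow_mul_rpow hu).symm)
      measurableSet_Ioo
  exact hC.re

lemma integral_one_sub_rpow_mul_rpow (hx : 0 < x) (hy : 0 < y) :
    ∫ u in Ioo (0 : ℝ) 1, (1 - u) ^ (x - 1) * u ^ (y - 1) = realBeta x y := by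
  have hB : Complex.betaIntegral y x =
      (((∫ u in Ioo (0 : ℝ) 1, (1 - u) ^ (x - 1) * u ^ (y - 1) : ℝ)) : ℂ) := by
    rw [Complex.betaIntegral, intervalIntegral.integral_of_le zero_le_one,
      integral_Ioc_eq_integral_Ioo,
      setIntegral_congr_fun measurableSet_Ioo fun u hu => (ofReal_one_sub_rpow_mul_rpow hu).symm]
    exact integral_ofReal
  have hΓ := Complex.Gamma_mul_Gamma_eq_betaIntegral (s := (y : ℂ)) (t := (x : ℂ))
    (by simpa) (by simpa)
  rw [hB, ← Complex.ofReal_add, Complex.Gamma_ofReal, Complex.Gamma_ofReal,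
    Complex.Gamma_ofReal] at hΓ
  have hΓ' : Gamma y * Gamma x =
      Gamma (y + x) * ∫ u in Ioo (0 : ℝ) 1, (1 - u) ^ (x - 1) * u ^ (y - 1) := by
    exact_mod_cast hΓ
  rw [realBeta, add_comm, mul_comm, hΓ',
    mul_div_cancel_left₀ _ (Gamma_pos_of_pos (by linarith)).ne']

end Beta

lemma sqrt_one_add_sub_sqrt_mem_Ioo {T : ℝ} (hT : 0 < T) : √(1 + T) - √T ∈ Ioo 0 1 := by
  have hlt : √T < √(1 + T) := sqrt_lt_sqrt hT.le (lt_one_add T)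
  have hgt : √(1 + T) < 1 + √T := by
    rw [sqrt_lt' (by positivity)]
    nlinarith [sq_sqrt hT.le, sqrt_pos.2 hT]
  exact ⟨sub_pos.2 hlt, by linarith⟩

lemma one_sub_sq_sq_div_of_sqrt_one_add_sub_sqrt {T : ℝ} (hT : 0 ≤ T) :
    (1 - (√(1 + T) - √T) ^ 2) ^ 2 / (4 * (√(1 + T) - √T) ^ 2) = T := by
  set s := √(1 + T) - √T
  have hs : s ≠ 0 := (sub_pos.2 (sqrt_lt_sqrt hT (lt_one_add T))).ne'
  -- since `(√(1 + T))² - (√T)² = 1`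
  have key : 1 - s ^ 2 = 2 * √T * s := by
    nlinarith [sq_sqrt hT, sq_sqrt (by linarith : (0 : ℝ) ≤ 1 + T)]
  rw [key]
  field_simp
  rw [sq_sqrt hT]
  ring

lemma sqrt_one_add_one_sub_sq_div_sub_sqrt {u : ℝ} (hu : u ∈ Ioo 0 1) :
    √(1 + (1 - u) ^ 2 / (4 * u)) - √((1 - u) ^ 2 / (4 * u)) = √u := by
  obtain ⟨hu0, hu1⟩ := hu
  have hsq (v : ℝ) : v ^ 2 / (4 * u) = (v / (2 * √u)) ^ 2 := by
    rw [div_pow, mul_pow, sq_sqrt hu0.le]; norm_num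
  rw [show 1 + (1 - u) ^ 2 / (4 * u) = (1 + u) ^ 2 / (4 * u) by field_simp; ring,
    hsq, hsq, sqrt_sq (by positivity), sqrt_sq (div_nonneg (by linarith) (by positivity)),
    ← sub_div, div_eq_iff (by positivity)]
  ring_nf
  rw [sq_sqrt hu0.le]

/-- The inverse `u ↦ t` of the substitution `√u = √(1 + t ^ p) - t ^ (p / 2)`. -/
noncomputable def betaSubst (p u : ℝ) : ℝ := 2 ^ (-(2 / p)) * (1 - u) ^ (2 / p) * u ^ (-(1 / p))

section betaSubst

variable {p u : ℝ}

lemma betaSubst_pos (hu : u ∈ Ioo 0 1) : 0 < betaSubst p u := by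
  have := sub_pos.2 hu.2
  have := hu.1
  unfold betaSubst
  positivity

lemma betaSubst_rpow (hp : p ≠ 0) (hu : u ∈ Ioo 0 1) :
    betaSubst p u ^ p = (1 - u) ^ 2 / (4 * u) := by
  obtain ⟨hu0, hu1⟩ := hu
  have h1u : 0 ≤ 1 - u := by linarith
  rw [betaSubst, mul_rpow (by positivity) (by positivity), mul_rpow (by positivity) (by positivity),
    ← rpow_mul (by norm_num), ← rpow_mul h1u, ← rpow_mul hu0.le]
  field_simp
  rw [rpow_neg (by norm_num), rpow_neg hu0.le, rpow_one, rpow_two, rpow_two]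
  field_simp
  norm_num

lemma sqrt_one_add_betaSubst_rpow_sub (hp : p ≠ 0) (hu : u ∈ Ioo 0 1) :
    √(1 + betaSubst p u ^ p) - betaSubst p u ^ (p / 2) = √u := by
  rw [div_eq_mul_one_div p 2, rpow_mul (betaSubst_pos hu).le, ← sqrt_eq_rpow,
    betaSubst_rpow hp hu, sqrt_one_add_one_sub_sq_div_sub_sqrt hu]

lemma injOn_betaSubst (hp : p ≠ 0) : InjOn (betaSubst p) (Ioo 0 1) := by
  intro u hu v hv huv
  rw [← sqrt_inj hu.1.le hv.1.le, ← sqrt_one_add_betaSubst_rpow_sub hp hu,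
    ← sqrt_one_add_betaSubst_rpow_sub hp hv, huv]

lemma betaSubst_image (hp : p ≠ 0) : betaSubst p '' Ioo 0 1 = Ioi 0 := by
  refine Subset.antisymm (image_subset_iff.2 fun u hu => betaSubst_pos hu) fun t ht => ?_
  have hT : 0 < t ^ p := rpow_pos_of_pos ht p
  have hs := sqrt_one_add_sub_sqrt_mem_Ioo hT
  have hu : (√(1 + t ^ p) - √(t ^ p)) ^ 2 ∈ Ioo 0 1 :=
    ⟨pow_pos hs.1 2, pow_lt_one₀ hs.1.le hs.2 two_ne_zero⟩
  refine ⟨_, hu, (rpow_left_inj (betaSubst_pos hu).le ht.le hp).1 ?_⟩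
  rw [betaSubst_rpow hp hu, one_sub_sq_sq_div_of_sqrt_one_add_sub_sqrt hT.le]

lemma hasDerivAt_betaSubst (hu : u ∈ Ioo 0 1) :
    HasDerivAt (betaSubst p)
      (-(2 ^ (-(2 / p)) / p * (1 + u) * (1 - u) ^ (2 / p - 1) * u ^ (-(1 / p) - 1))) u := by
  obtain ⟨hu0, hu1⟩ := hu
  have h1u : 1 - u ≠ 0 := (sub_pos.2 hu1).ne'
  have hd := (((hasDerivAt_id u).const_sub 1).rpow_const (p := 2 / p) (Or.inl h1u)).mul
    (hasDerivAt_rpow_const (p := -(1 / p)) (Or.inl hu0.ne'))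
  rw [show betaSubst p = fun v => 2 ^ (-(2 / p)) * ((1 - v) ^ (2 / p) * v ^ (-(1 / p))) by
    funext v; rw [betaSubst, mul_assoc]]
  refine (hd.const_mul _).congr_deriv ?_
  simp only [id]
  rw [show (1 - u) ^ (2 / p) = (1 - u) ^ (2 / p - 1 + 1) by ring_nf,
    show u ^ (-(1 / p)) = u ^ (-(1 / p) - 1 + 1) by ring_nf, rpow_add_one h1u,
    rpow_add_one hu0.ne']
  field_simp
  ring

end betaSubst

theorem integral_sqrt_one_add_rpow_sub_rpow_half {p : ℝ} (hp : 2 < p) :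
    ∫ t in Ioi (0 : ℝ), (√(1 + t ^ p) - t ^ (p / 2)) =
      1 / (2 ^ (2 / p) * p) *
        (realBeta (2 / p) (1 / 2 - 1 / p) + realBeta (2 / p) (3 / 2 - 1 / p)) := by
  have hp0 : p ≠ 0 := by positivity
  have ha : 0 < 2 / p := by positivity
  have hb₁ : 0 < 1 / 2 - 1 / p := by
    rw [sub_pos, div_lt_div_iff₀ (by positivity) (by positivity)]; linarith
  have hb₃ : 0 < 3 / 2 - 1 / p := by linarith
  have hintegrand : ∀ u ∈ Ioo (0 : ℝ) 1,
      |-(2 ^ (-(2 / p)) / p * (1 + u) * (1 - u) ^ (2 / p - 1) * u ^ (-(1 / p) - 1))|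
        • (√(1 + betaSubst p u ^ p) - betaSubst p u ^ (p / 2)) =
      1 / (2 ^ (2 / p) * p) * ((1 - u) ^ (2 / p - 1) * u ^ (1 / 2 - 1 / p - 1)
        + (1 - u) ^ (2 / p - 1) * u ^ (3 / 2 - 1 / p - 1)) := by
    intro u hu
    have := sub_pos.2 hu.2
    have := hu.1
    rw [sqrt_one_add_betaSubst_rpow_sub hp0 hu, abs_neg, abs_of_pos (by positivity), smul_eq_mul,
      sqrt_eq_rpow, show (3 / 2 - 1 / p - 1 : ℝ) = 1 / 2 - 1 / p - 1 + 1 by ring,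
      rpow_add_one hu.1.ne', show (1 / 2 - 1 / p - 1 : ℝ) = -(1 / p) - 1 + 1 / 2 by ring,
      rpow_add hu.1, rpow_neg (by norm_num)]
    ring
  rw [← betaSubst_image hp0, integral_image_eq_integral_abs_deriv_smul measurableSet_Ioo
      (fun u hu => (hasDerivAt_betaSubst hu).hasDerivWithinAt) (injOn_betaSubst hp0),
    setIntegral_congr_fun measurableSet_Ioo hintegrand, integral_const_mul,
    integral_add (integrableOn_one_sub_rpow_mul_rpow ha hb₁)
      (integrableOn_one_sub_rpow_mul_rpow ha hb₃),
    integral_one_sub_rpow_mul_rpow ha hb₁, integral_one_sub_rpow_mul_rpow ha hb₃]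

theorem stmt_1 (m : ℕ) (hm : 3 ≤ m) :
    ∫ t in Ioi (0 : ℝ), (Real.sqrt (1 + t ^ m) - t ^ ((m : ℝ) / 2)) =
      (1 / (2 ^ ((2 : ℝ) / m) * m)) *
        (realBeta (2 / m) (1 / 2 - 1 / m) + realBeta (2 / m) (3 / 2 - 1 / m)) := by
  simp_rw [← rpow_natCast]
  exact integral_sqrt_one_add_rpow_sub_rpow_half (by exact_mod_cast hm)
end

section
/- Let m ≥ 3 and 2 ≤ j < (m+2)/2. Then ∫₀^∞ ( t^{m−j}/√(1+t^m) − t^{m/2−j} ) dt = −(2^{2(j−1)/m}/m) · B(1 − 2(j−1)/m, 1/2 + (j−1)/m). -/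
open Real MeasureTheory Set

/-!
Substituting `s = t ^ m` turns the integral into `(1/m) ∫₀^∞ s^(a-1) ((1+s)^(-c) - s^(-c)) ds`
with `c = 1/2`, `a = 1 - α` and `α = (j-1)/m ∈ (0, 1/2)`. Writing
`(1+s)^(-c) - s^(-c) = -c ∫₀¹ (s+v)^(-c-1) dv` and exchanging the integrals, the inner integral
`∫₀^∞ s^(a-1) (s+v)^(-c-1) ds` is, after scaling `s = v w`, `v^(a-c-1) B(a, c+1-a)` by the
half-line beta integral `∫₀^∞ w^(a-1) (1+w)^(-a-b) dw = B(a, b)`; integrating over `v` gives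
`-(c/(a-c)) B(a, c+1-a)`. Legendre's duplication formula turns `B(1-α, 1/2+α) / (1-2α)` into
`2^(2α) B(1-2α, 1/2+α)`.
-/

lemma realBeta_eq_intervalIntegral {a b : ℝ} (ha : 0 < a) (hb : 0 < b) :
    realBeta a b = ∫ x in (0 : ℝ)..1, x ^ (a - 1) * (1 - x) ^ (b - 1) := by
  have hcongr : ∀ x ∈ uIcc (0 : ℝ) 1,
      (x : ℂ) ^ ((a : ℂ) - 1) * (1 - (x : ℂ)) ^ ((b : ℂ) - 1) =
        ((x ^ (a - 1) * (1 - x) ^ (b - 1) : ℝ) : ℂ) := by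
    intro x hx
    rw [uIcc_of_le zero_le_one] at hx
    push_cast [Complex.ofReal_cpow hx.1, Complex.ofReal_cpow (sub_nonneg.2 hx.2)]
    rfl
  rw [show realBeta a b = ProbabilityTheory.beta a b from rfl,
    ProbabilityTheory.beta_eq_betaIntegralReal a b ha hb, Complex.betaIntegral,
    intervalIntegral.integral_congr hcongr, intervalIntegral.integral_ofReal, Complex.ofReal_re]

lemma integral_Ioi_rpow_mul_one_add_rpow_eq_intervalIntegral (a b : ℝ) :
    ∫ w in Ioi (0 : ℝ), w ^ (a - 1) * (1 + w) ^ (-(a + b)) =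
      ∫ x in (0 : ℝ)..1, x ^ (a - 1) * (1 - x) ^ (b - 1) := by
  have hderiv : ∀ w ∈ Ioi (0 : ℝ),
      HasDerivWithinAt (fun w : ℝ => w / (1 + w)) ((1 + w) ^ (-(2 : ℝ))) (Ioi 0) w := by
    intro w (hw : 0 < w)
    have h1w : 1 + w ≠ 0 := by positivity
    refine ((hasDerivAt_id w).div ((hasDerivAt_id w).const_add 1) h1w).hasDerivWithinAt
      |>.congr_deriv ?_
    rw [rpow_neg (by positivity), rpow_two, id]
    field_simp
    ring
  have hinj : InjOn (fun w : ℝ => w / (1 + w)) (Ioi 0) := by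
    intro x (hx : 0 < x) y (hy : 0 < y) hxy
    field_simp at hxy
    linarith
  have himage : (fun w : ℝ => w / (1 + w)) '' Ioi 0 = Ioo 0 1 := by
    ext u
    constructor
    · rintro ⟨w, hw : 0 < w, rfl⟩
      exact ⟨by positivity, (div_lt_one (by positivity)).2 (by linarith)⟩
    · rintro ⟨hu0, hu1⟩
      refine ⟨u / (1 - u), div_pos hu0 (by linarith), ?_⟩
      have : 1 - u ≠ 0 := by linarith
      field_simp
      ring
  have hcov := integral_image_eq_integral_abs_deriv_smul measurableSet_Ioi hderiv hinj
    (fun x : ℝ => x ^ (a - 1) * (1 - x) ^ (b - 1))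
  rw [himage] at hcov
  rw [intervalIntegral.integral_of_le zero_le_one, integral_Ioc_eq_integral_Ioo, hcov]
  refine setIntegral_congr_fun measurableSet_Ioi fun w (hw : 0 < w) => ?_
  have h1w : 0 < 1 + w := by positivity
  have hsub : 1 - w / (1 + w) = (1 + w)⁻¹ := by field_simp; ring
  rw [smul_eq_mul, hsub, abs_of_pos (rpow_pos_of_pos h1w _), div_rpow hw.le h1w.le,
    inv_rpow h1w.le, ← rpow_neg h1w.le, div_eq_mul_inv, ← rpow_neg h1w.le]
  rw [show w ^ (a - 1) * (1 + w) ^ (-(a + b)) = w ^ (a - 1) * ((1 + w) ^ (-(2 : ℝ)) *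
      (1 + w) ^ (-(a - 1)) * (1 + w) ^ (-(b - 1))) by
    rw [← rpow_add h1w, ← rpow_add h1w]; ring_nf]
  ring

lemma integral_Ioi_rpow_mul_one_add_rpow_eq_realBeta {a b : ℝ} (ha : 0 < a) (hb : 0 < b) :
    ∫ w in Ioi (0 : ℝ), w ^ (a - 1) * (1 + w) ^ (-(a + b)) = realBeta a b := by
  rw [integral_Ioi_rpow_mul_one_add_rpow_eq_intervalIntegral, realBeta_eq_intervalIntegral ha hb]

lemma integrableOn_Ioi_rpow_mul_one_add_rpow {a b : ℝ} (ha : 0 < a) (hb : 0 < b) :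
    IntegrableOn (fun w : ℝ => w ^ (a - 1) * (1 + w) ^ (-(a + b))) (Ioi 0) := by
  refine Integrable.of_integral_ne_zero ?_
  rw [integral_Ioi_rpow_mul_one_add_rpow_eq_realBeta ha hb]
  exact (ProbabilityTheory.beta_pos ha hb).ne'

lemma rpow_mul_add_rpow_comp_mul {a b v x : ℝ} (hv : 0 < v) (hx : 0 < x) :
    (v * x) ^ (a - 1) * (v * x + v) ^ (-(a + b)) =
      v ^ (-b - 1) * (x ^ (a - 1) * (1 + x) ^ (-(a + b))) := by
  rw [show v * x + v = v * (1 + x) by ring, mul_rpow hv.le hx.le, mul_rpow hv.le (by positivity),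
    show -b - 1 = (a - 1) + -(a + b) by ring, rpow_add hv]
  ring

lemma integrableOn_Ioi_rpow_mul_add_rpow {a b v : ℝ} (ha : 0 < a) (hb : 0 < b) (hv : 0 < v) :
    IntegrableOn (fun s : ℝ => s ^ (a - 1) * (s + v) ^ (-(a + b))) (Ioi 0) := by
  rw [← mul_zero v, ← integrableOn_Ioi_comp_mul_left_iff _ 0 hv]
  refine IntegrableOn.congr_fun ((integrableOn_Ioi_rpow_mul_one_add_rpow ha hb).const_mul
    (v ^ (-b - 1))) (fun x (hx : 0 < x) => ?_) measurableSet_Ioi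
  exact (rpow_mul_add_rpow_comp_mul hv hx).symm

lemma integral_Ioi_rpow_mul_add_rpow {a b v : ℝ} (ha : 0 < a) (hb : 0 < b) (hv : 0 < v) :
    ∫ s in Ioi (0 : ℝ), s ^ (a - 1) * (s + v) ^ (-(a + b)) = v ^ (-b) * realBeta a b := by
  have hscale := integral_comp_mul_left_Ioi (fun s : ℝ => s ^ (a - 1) * (s + v) ^ (-(a + b))) 0 hv
  rw [mul_zero, setIntegral_congr_fun measurableSet_Ioi
      (fun x (hx : 0 < x) => rpow_mul_add_rpow_comp_mul hv hx), integral_const_mul,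
    integral_Ioi_rpow_mul_one_add_rpow_eq_realBeta ha hb, smul_eq_mul,
    eq_inv_mul_iff_mul_eq₀ hv.ne']
    at hscale
  rw [← hscale, ← mul_assoc, ← rpow_one_add' hv.le (by linarith)]
  ring_nf

lemma integral_Ioc_add_rpow {s c : ℝ} (hs : 0 < s) (hc : c ≠ 0) :
    ∫ v in Ioc (0 : ℝ) 1, (s + v) ^ (-(c + 1)) = (s ^ (-c) - (1 + s) ^ (-c)) / c := by
  have hs_nmem : (0 : ℝ) ∉ uIcc s (1 + s) := fun h => by
    rw [uIcc_of_le (by linarith)] at h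
    linarith [h.1]
  rw [← intervalIntegral.integral_of_le zero_le_one,
    intervalIntegral.integral_comp_add_left (fun x => x ^ (-(c + 1))), add_zero, add_comm s 1,
    integral_rpow (Or.inr ⟨by contrapose! hc; linarith, hs_nmem⟩),
    show -(c + 1) + 1 = -c by ring]
  field_simp
  ring

lemma integral_Ioi_rpow_mul_one_add_rpow_sub_rpow {a c : ℝ} (hc : 0 < c) (hca : c < a)
    (hac : a < c + 1) :
    ∫ s in Ioi (0 : ℝ), s ^ (a - 1) * ((1 + s) ^ (-c) - s ^ (-c)) =
      -(c / (a - c)) * realBeta a (c + 1 - a) := by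
  set b := c + 1 - a
  have ha : 0 < a := by linarith
  have hb : 0 < b := by linarith
  have hcab : -(c + 1) = -(a + b) := by ring
  set F : ℝ → ℝ → ℝ := fun v s => s ^ (a - 1) * (s + v) ^ (-(a + b)) with hF
  have hdiff : ∀ s ∈ Ioi (0 : ℝ),
      s ^ (a - 1) * ((1 + s) ^ (-c) - s ^ (-c)) = -c * ∫ v in Ioc (0 : ℝ) 1, F v s := by
    intro s (hs : 0 < s)
    rw [hF, integral_const_mul, ← hcab, integral_Ioc_add_rpow hs hc.ne']
    field_simp
    ring
  have hinner :
      ∀ v ∈ Ioc (0 : ℝ) 1, ∫ s in Ioi (0 : ℝ), F v s = v ^ (-b) * realBeta a b :=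
    fun v hv => integral_Ioi_rpow_mul_add_rpow ha hb hv.1
  have hmeas : AEStronglyMeasurable (Function.uncurry F)
      ((volume.restrict (Ioc (0 : ℝ) 1)).prod (volume.restrict (Ioi 0))) := by
    rw [Measure.prod_restrict]
    refine ContinuousOn.aestronglyMeasurable ?_ (measurableSet_Ioc.prod measurableSet_Ioi)
    refine (continuous_snd.continuousOn.rpow_const fun p hp => Or.inl hp.2.ne').mul
      ((continuous_snd.add continuous_fst).continuousOn.rpow_const fun p hp => Or.inl ?_)
    exact (add_pos hp.2 hp.1.1).ne'
  have hpowb : IntegrableOn (fun v : ℝ => v ^ (-b)) (Ioc 0 1) :=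
    (intervalIntegrable_iff_integrableOn_Ioc_of_le zero_le_one).1
      (intervalIntegral.intervalIntegrable_rpow' (by linarith))
  have hint : Integrable (Function.uncurry F)
      ((volume.restrict (Ioc (0 : ℝ) 1)).prod (volume.restrict (Ioi 0))) := by
    refine (integrable_prod_iff hmeas).2 ⟨?_, ?_⟩
    · filter_upwards [ae_restrict_mem measurableSet_Ioc] with v hv
      exact integrableOn_Ioi_rpow_mul_add_rpow ha hb hv.1
    · refine IntegrableOn.congr_fun (hpowb.mul_const (realBeta a b)) (fun v hv => ?_)
        measurableSet_Ioc
      rw [← hinner v hv]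
      refine setIntegral_congr_fun measurableSet_Ioi fun s (hs : 0 < s) => ?_
      exact (Real.norm_of_nonneg (by positivity [hv.1])).symm
  have hpowb_integral : ∫ v in Ioc (0 : ℝ) 1, v ^ (-b) = 1 / (a - c) := by
    rw [← intervalIntegral.integral_of_le zero_le_one, integral_rpow (Or.inl (by linarith)),
      one_rpow, zero_rpow (by linarith), show -b + 1 = a - c by ring]
    ring
  calc ∫ s in Ioi (0 : ℝ), s ^ (a - 1) * ((1 + s) ^ (-c) - s ^ (-c))
      = ∫ s in Ioi (0 : ℝ), -c * ∫ v in Ioc (0 : ℝ) 1, F v s :=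
        setIntegral_congr_fun measurableSet_Ioi hdiff
    _ = -c * ∫ v in Ioc (0 : ℝ) 1, ∫ s in Ioi (0 : ℝ), F v s := by
        rw [integral_const_mul, integral_integral_swap hint]
    _ = -(c / (a - c)) * realBeta a b := by
        rw [setIntegral_congr_fun measurableSet_Ioc hinner, integral_mul_const, hpowb_integral]
        ring

lemma realBeta_one_sub_eq_mul_realBeta_one_sub_two_mul {α : ℝ} (hα : α < 1 / 2) :
    realBeta (1 - α) (1 / 2 + α) =
      (1 - 2 * α) * 2 ^ (2 * α) * realBeta (1 - 2 * α) (1 / 2 + α) := by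
  have hdup := Real.Gamma_mul_Gamma_add_half (1 - α)
  rw [show 2 * (1 - α) = (1 - 2 * α) + 1 by ring, Real.Gamma_add_one (by linarith),
    show 1 - (1 - 2 * α + 1) = 2 * α - 1 by ring, rpow_sub two_pos, rpow_one] at hdup
  have hG : Real.Gamma (1 - α + 1 / 2) ≠ 0 := (Real.Gamma_pos_of_pos (by linarith)).ne'
  have hΓ32 : Real.Gamma (1 - α + (1 / 2 + α)) = √π / 2 := by
    rw [show 1 - α + (1 / 2 + α) = 1 / 2 + 1 by ring, Real.Gamma_add_one (by norm_num),
      Real.Gamma_one_half_eq]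
    ring
  have hpi : √π ≠ 0 := (Real.sqrt_pos.2 pi_pos).ne'
  unfold realBeta
  rw [hΓ32, show 1 - 2 * α + (1 / 2 + α) = 1 - α + 1 / 2 by ring]
  generalize Real.Gamma (1 - α + 1 / 2) = G at hG hdup ⊢
  generalize Real.Gamma (1 / 2 + α) = H
  generalize Real.Gamma (1 - 2 * α) = K at hdup ⊢
  generalize (2 : ℝ) ^ (2 * α) = P at hdup ⊢
  field_simp
  linear_combination 2 * H * hdup

lemma integral_Ioi_rpow_div_sqrt_sub_rpow {m j : ℝ} (hm : 0 < m) :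
    ∫ t in Ioi (0 : ℝ), (t ^ (m - j) / √(1 + t ^ m) - t ^ (m / 2 - j)) =
      (1 / m) * ∫ s in Ioi (0 : ℝ),
        s ^ ((m - j + 1) / m - 1) * ((1 + s) ^ (-(1 / 2) : ℝ) - s ^ (-(1 / 2) : ℝ)) := by
  rw [← integral_const_mul]
  conv_rhs => rw [← integral_comp_rpow_Ioi_of_pos hm]
  refine setIntegral_congr_fun measurableSet_Ioi fun t (ht : 0 < t) => ?_
  have hpow : ∀ x y : ℝ, t ^ x * (t ^ m) ^ y = t ^ (x + m * y) := fun x y => by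
    rw [← rpow_mul ht.le, rpow_add ht]
  have hfirst : t ^ (m - 1) * (t ^ m) ^ ((m - j + 1) / m - 1) = t ^ (m - j) := by
    rw [hpow]; congr 1; field_simp; ring
  have hsecond : t ^ (m - j) * (t ^ m) ^ (-(1 / 2) : ℝ) = t ^ (m / 2 - j) := by
    rw [hpow]; congr 1; ring
  rw [sqrt_eq_rpow, div_eq_mul_inv, ← rpow_neg (by positivity), smul_eq_mul, ← hsecond,
    ← hfirst]
  field_simp

theorem stmt_5_general (m j : ℕ) (hj : 2 ≤ j) (hj2 : 2 * j < m + 2) :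
    ∫ t in Ioi (0 : ℝ),
        (t ^ ((m : ℝ) - j) / Real.sqrt (1 + t ^ m) - t ^ ((m : ℝ) / 2 - j)) =
      -(2 ^ (2 * ((j : ℝ) - 1) / m) / m) *
        realBeta (1 - 2 * ((j : ℝ) - 1) / m) (1 / 2 + ((j : ℝ) - 1) / m) := by
  have hjR : (2 : ℝ) ≤ j := by exact_mod_cast hj
  have hj2R : 2 * (j : ℝ) < m + 2 := by exact_mod_cast hj2
  have hm : (0 : ℝ) < m := by linarith
  set α := ((j : ℝ) - 1) / m with hα_def
  have hα0 : 0 < α := div_pos (by linarith) hm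
  have hα : α < 1 / 2 := by rw [div_lt_iff₀ hm]; linarith
  have ha : ((m : ℝ) - j + 1) / m = 1 - α := by rw [hα_def]; field_simp; ring
  have hcore := integral_Ioi_rpow_mul_one_add_rpow_sub_rpow (a := 1 - α) (c := 1 / 2)
    (by norm_num) (by linarith) (by linarith)
  simp only [← rpow_natCast _ m]
  rw [integral_Ioi_rpow_div_sqrt_sub_rpow hm, ha, hcore,
    show 1 / 2 + 1 - (1 - α) = 1 / 2 + α by ring, show 1 - α - 1 / 2 = (1 - 2 * α) / 2 by ring,
    realBeta_one_sub_eq_mul_realBeta_one_sub_two_mul hα,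
    show 2 * ((j : ℝ) - 1) / m = 2 * α by ring]
  have h2α : 1 - 2 * α ≠ 0 := by linarith
  field_simp

theorem stmt_5 (m j : ℕ) (hm : 3 ≤ m) (hj : 2 ≤ j) (hj2 : 2 * j < m + 2) :
    ∫ t in Ioi (0 : ℝ),
        (t ^ ((m : ℝ) - j) / Real.sqrt (1 + t ^ m) - t ^ ((m : ℝ) / 2 - j)) =
      -(2 ^ (2 * ((j : ℝ) - 1) / m) / m) *
        realBeta (1 - 2 * ((j : ℝ) - 1) / m) (1 / 2 + ((j : ℝ) - 1) / m) :=
  stmt_5_general m j hj hj2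
end
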